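/- arXiv:2212.11262 — 3 statements merged into one kernel-verified Lean document; each statement's English description precedes it below -/
import Mathlib

section
/- Let F be a finite field and n ≥ k ≥ 2. Suppose V ∈ F^{k×n} has all k×k minors nonzero (V is MDS), and suppose that for all A1, A2, A3 ⊆ [n] with A2 ≠ A3, |A1| = 2, |A2| = |A3| = k−1, and A1 disjoint from A2 ∪ A3, the column spans satisfy span(V_{A1}) ∩ span(V_{A2}) ∩ span(V_{A3}) = 0. Then |F| ≥ C(n−2, k−1) − 1. -/
/-- Span of the columns of `V` indexed by `A`. -/
def colSpan {F : Type*} [Field F] {k n : ℕ} (V : Matrix (Fin k) (Fin n) F)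
    (A : Finset (Fin n)) : Submodule F (Fin k → F) :=
  Submodule.span F ((fun j => fun i => V i j) '' (A : Set (Fin n)))

/-!
Fix two columns `p, q`. For every `(k-1)`-set `A` of the remaining columns, the `k` columns
`A ∪ {p}` form a basis, so some vector `v_q + c_A v_p` of the line through `v_q` in direction
`v_p` lies in `span V_A`. If `c_A = c_B` for `A ≠ B`, this nonzero vector lies in
`span V_{p,q} ∩ span V_A ∩ span V_B = 0`. Hence `A ↦ c_A` is injective, and
`|F| ≥ C(n-2, k-1)`.
-/

open Finset Submodule Module Matrix

theorem Matrix.linearIndepOn_cols_of_forall_det_ne_zero {F : Type*} [Field F] {k n : ℕ}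
    {V : Matrix (Fin k) (Fin n) F} (hkn : k ≤ n)
    (hV : ∀ f : Fin k → Fin n, Function.Injective f → (V.submatrix id f).det ≠ 0)
    {s : Finset (Fin n)} (hs : #s ≤ k) : LinearIndepOn F V.col (s : Set (Fin n)) := by
  obtain ⟨t, hst, ht⟩ := exists_superset_card_eq hs (by simpa using hkn)
  let f := t.orderEmbOfFin ht
  have hf : LinearIndepOn F V.col (Set.range f) :=
    (linearIndepOn_range_iff f.injective _).2
      (linearIndependent_cols_of_det_ne_zero (hV f f.injective))
  rw [range_orderEmbOfFin] at hf
  exact hf.mono hst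

section

variable {F W : Type*} [Field F] [AddCommGroup W] [Module F W]

theorem LinearIndepOn.exists_add_smul_mem_span [FiniteDimensional F W] {ι : Type*}
    [DecidableEq ι] {v : ι → W} {p : ι} {A : Finset ι}
    (h : LinearIndepOn F v ↑(insert p A)) (hcard : #(insert p A) = finrank F W) (x : W) :
    ∃ c : F, x + c • v p ∈ span F (v '' A) := by
  have htop : span F (v '' ↑(insert p A)) = ⊤ := by
    rw [Set.image_eq_range]
    exact h.linearIndependent.span_eq_top_of_card_eq_finrank' (by simpa using hcard)
  rw [← mem_span_insert', ← Set.image_insert_eq, ← coe_insert, htop]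
  exact mem_top

theorem card_le_card_of_forall_exists_add_smul_mem [Fintype F] {α : Type*} {P : Submodule F W}
    {x y : W} (hx : x ∈ P) (hy : y ∈ P) (hyx : y ∉ span F {x}) {U : α → Submodule F W}
    {S : Finset α} (hU : ∀ a ∈ S, ∃ c : F, y + c • x ∈ U a)
    (hPU : ∀ a ∈ S, ∀ b ∈ S, a ≠ b → P ⊓ U a ⊓ U b = ⊥) :
    #S ≤ Fintype.card F := by
  classical
  choose c hc using fun a => if ha : a ∈ S then (hU a ha).imp fun _ h _ => h
    else ⟨(0 : F), fun h => absurd h ha⟩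
  refine card_le_card_of_injOn c (fun _ _ => mem_univ _) fun a ha b hb hab => ?_
  by_contra hne
  have hw : y + c a • x ∈ P ⊓ U a ⊓ U b :=
    ⟨⟨P.add_mem hy (P.smul_mem _ hx), hc a ha⟩, hab ▸ hc b hb⟩
  rw [hPU a ha b hb hne, mem_bot, add_eq_zero_iff_eq_neg, ← neg_smul] at hw
  exact hyx (hw ▸ smul_mem _ _ (mem_span_singleton_self x))

end

theorem stmt_1 (F : Type*) [Field F] [Fintype F] (n k : ℕ) (hk : 2 ≤ k) (hn : k ≤ n)
    (V : Matrix (Fin k) (Fin n) F)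
    (hMDS : ∀ f : Fin k → Fin n, Function.Injective f → (V.submatrix id f).det ≠ 0)
    (hInt : ∀ A1 A2 A3 : Finset (Fin n), A2 ≠ A3 → A1.card = 2 →
      A2.card = k - 1 → A3.card = k - 1 → Disjoint A1 (A2 ∪ A3) →
      colSpan V A1 ⊓ colSpan V A2 ⊓ colSpan V A3 = ⊥) :
    Nat.choose (n - 2) (k - 1) - 1 ≤ Fintype.card F := by
  have hcols (s : Finset (Fin n)) (hs : #s ≤ k) : LinearIndepOn F V.col ↑s :=
    linearIndepOn_cols_of_forall_det_ne_zero hn hMDS hs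
  let p : Fin n := ⟨0, by omega⟩
  let q : Fin n := ⟨1, by omega⟩
  have hpq : p ≠ q := by simp [p, q, Fin.ext_iff]
  let S := powersetCard (k - 1) (univ \ {p, q})
  have hline : ∀ A ∈ S, ∃ c : F, V.col q + c • V.col p ∈ colSpan V A := by
    intro A hA
    obtain ⟨hAsub, hAcard⟩ := mem_powersetCard.1 hA
    have hpA : p ∉ A := fun h => by simpa using hAsub h
    have hcard : #(insert p A) = k := by rw [card_insert_of_notMem hpA]; omega
    exact (hcols _ hcard.le).exists_add_smul_mem_span (by simpa using hcard) _
  have hqp : V.col q ∉ span F {V.col p} := by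
    have h := hcols {q, p} (by rw [card_pair hpq.symm]; omega)
    rw [coe_pair, linearIndepOn_insert (by simpa using hpq.symm), Set.image_singleton] at h
    exact h.2
  have hS : ∀ A ∈ S, Disjoint {p, q} A := fun A hA =>
    disjoint_sdiff.mono_right (mem_powersetCard.1 hA).1
  calc Nat.choose (n - 2) (k - 1) - 1 ≤ #S := by
        simp [S, card_powersetCard, card_sdiff_of_subset, card_pair hpq]
    _ ≤ Fintype.card F :=
        card_le_card_of_forall_exists_add_smul_mem (P := colSpan V {p, q})
          (subset_span ⟨p, by simp, rfl⟩) (subset_span ⟨q, by simp, rfl⟩) hqp hline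
          fun A hA B hB hAB => hInt _ _ _ hAB (card_pair hpq) (mem_powersetCard.1 hA).2
            (mem_powersetCard.1 hB).2 (disjoint_union_right.2 ⟨hS A hA, hS B hB⟩)
end

section
/- Let V be a k×n MDS matrix over a field F (all k×k minors nonzero), let I ⊆ [n] with |I| = k − k' for some 0 < k' ≤ k, and let Π : F^k → F^{k'} be a surjective linear map with kernel equal to the span of the columns of V indexed by I. Define V' to be the k'×(n−|I|) matrix whose columns are Π(v_i) for i ∈ [n] \ I. Then V' is MDS, i.e., every k' columns of V' are linearly independent. -/
open Submodule in
theorem LinearIndepOn.map_of_ker_le_span {R M N ι : Type*} [Ring R] [AddCommGroup M]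
    [Module R M] [AddCommGroup N] [Module R N] {v : ι → M} {s t : Set ι}
    (hv : LinearIndepOn R v (s ∪ t)) (hst : Disjoint s t) {f : M →ₗ[R] N}
    (hf : LinearMap.ker f ≤ span R (v '' s)) : LinearIndepOn R (f ∘ v) t := by
  obtain ⟨-, ht, hdisj⟩ := (linearIndepOn_union_iff hst).1 hv
  refine LinearIndependent.map ht ?_
  rw [← Set.image_eq_range]
  exact hdisj.symm.mono_right hf

theorem stmt_9_general (F : Type*) [Field F] (n k k' : ℕ) (hkk : k' ≤ k)
    (V : Matrix (Fin k) (Fin n) F)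
    (hMDS : ∀ A : Finset (Fin n), A.card = k →
      LinearIndependent F (fun j : A => fun i => V i j.1))
    (I : Finset (Fin n)) (hI : I.card = k - k')
    (P : (Fin k → F) →ₗ[F] (Fin k' → F))
    (hker : LinearMap.ker P = colSpan V I) :
    ∀ J : Finset (Fin n), J.card = k' → Disjoint J I →
      LinearIndependent F (fun j : J => P (fun i => V i j.1)) := by
  intro J hJ hdisj
  have hcard : (I ∪ J).card = k := by
    rw [Finset.card_union_of_disjoint hdisj.symm, hI, hJ, Nat.sub_add_cancel hkk]
  have hIJ : LinearIndepOn F (fun j i => V i j) ((I : Set (Fin n)) ∪ J) := by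
    rw [← Finset.coe_union]
    exact hMDS (I ∪ J) hcard
  exact hIJ.map_of_ker_le_span (Finset.disjoint_coe.2 hdisj.symm) hker.le

theorem stmt_9 (F : Type*) [Field F] (n k k' : ℕ) (hk' : 0 < k') (hkk : k' ≤ k)
    (V : Matrix (Fin k) (Fin n) F)
    (hMDS : ∀ A : Finset (Fin n), A.card = k →
      LinearIndependent F (fun j : A => fun i => V i j.1))
    (I : Finset (Fin n)) (hI : I.card = k - k')
    (P : (Fin k → F) →ₗ[F] (Fin k' → F)) (hsurj : Function.Surjective P)
    (hker : LinearMap.ker P = colSpan V I) :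
    ∀ J : Finset (Fin n), J.card = k' → Disjoint J I →
      LinearIndependent F (fun j : J => P (fun i => V i j.1)) :=
  stmt_9_general F n k k' hkk V hMDS I hI P hker
end

section
/- Let F be a field, β_1,...,β_n ∈ F distinct, V the k×n Vandermonde matrix with columns (1, β_i,...,β_i^{k−1})^T. Let A_1, A_2, A_3 ⊆ [n] with i ∈ A_2 ∩ A_3, i ∉ A_1. Let V' be the (k−1)×n Vandermonde matrix on the same points. Then V_{A_1} ∩ V_{A_2} ∩ V_{A_3} = 0 if and only if V'_{A_1} ∩ V'_{A_2\{i}} ∩ V'_{A_3\{i}} = 0, provided |A_1| + |A_2| + |A_3| = 2k, each |A_j| ≤ k, and |A_1| ≤ k − 1. -/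
/-!
Identify the dual of `F^m` with the polynomials of degree `< m`, so that a functional evaluated
on the Vandermonde column of `β j` is the polynomial evaluated at `β j`. The annihilator of
`V_A` becomes the space of polynomials of degree `< m` vanishing on `β '' A`, and
`V_{A₁} ∩ V_{A₂} ∩ V_{A₃} = 0` becomes: every polynomial of degree `< m` is a sum
`p₁ + p₂ + p₃` with `pⱼ` vanishing on `β '' Aⱼ`.

Multiplication by `X - β i` maps such decompositions in degree `< k - 1` for
`(A₁, A₂ \ {i}, A₃ \ {i})` bijectively onto the decompositions in degree `< k` for
`(A₁, A₂, A₃)` of the polynomials vanishing at `β i`. The remaining direction in degree `< k` is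
spanned by `∏_{j ∈ A₁} (X - β j)`, which has degree `≤ k - 1`, vanishes on `β '' A₁` and not
at `β i`.
-/

open Polynomial

theorem Submodule.eq_of_inf_ker_eq {K V : Type*} [Field K] [AddCommGroup V] [Module K V]
    {S D : Submodule K V} (φ : V →ₗ[K] K) {P : V} (hSD : S ≤ D) (hPS : P ∈ S) (hP : φ P ≠ 0)
    (h : S ⊓ LinearMap.ker φ = D ⊓ LinearMap.ker φ) : S = D := by
  refine le_antisymm hSD ?_
  have hPD : K ∙ P ≤ D := (span_singleton_le_iff_mem P D).2 (hSD hPS)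
  calc D = (K ∙ P ⊔ LinearMap.ker φ) ⊓ D := by
        rw [φ.span_singleton_sup_ker_eq_top hP, top_inf_eq]
    _ = K ∙ P ⊔ D ⊓ LinearMap.ker φ := by rw [sup_inf_assoc_of_le _ hPD, inf_comm]
    _ ≤ S := by rw [← h]; exact sup_le ((span_singleton_le_iff_mem P S).2 hPS) inf_le_left

section

variable {F : Type*} [Field F]

theorem X_sub_C_mul_mem_degreeLT_succ_iff {a : F} {q : F[X]} {K : ℕ} :
    (X - C a) * q ∈ degreeLT F (K + 1) ↔ q ∈ degreeLT F K := by
  rcases eq_or_ne q 0 with rfl | hq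
  · simp only [mul_zero, Submodule.zero_mem]
  · rw [mem_degreeLT, mem_degreeLT, degree_mul, degree_X_sub_C, Nat.cast_add, Nat.cast_one,
      add_comm (1 : WithBot ℕ)]
    exact WithBot.add_lt_add_iff_right (by simp)

noncomputable def vanishingDegreeLT {ι : Type*} (β : ι → F) (m : ℕ)
    (A : Finset ι) : Submodule F F[X] :=
  degreeLT F m ⊓ ⨅ j ∈ A, LinearMap.ker (leval (β j))

section Vanishing

variable {ι : Type*} {β : ι → F} {m : ℕ} {A : Finset ι}

theorem mem_vanishingDegreeLT {p : F[X]} :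
    p ∈ vanishingDegreeLT β m A ↔ p ∈ degreeLT F m ∧ ∀ j ∈ A, p.eval (β j) = 0 := by
  simp [vanishingDegreeLT]

theorem vanishingDegreeLT_le_degreeLT : vanishingDegreeLT β m A ≤ degreeLT F m := inf_le_left

@[simp]
theorem vanishingDegreeLT_empty : vanishingDegreeLT β m ∅ = degreeLT F m := by
  simp [vanishingDegreeLT]

theorem vanishingDegreeLT_le_ker_leval {i : ι} (hi : i ∈ A) :
    vanishingDegreeLT β m A ≤ LinearMap.ker (leval (β i)) :=
  fun _ hp => (mem_vanishingDegreeLT.1 hp).2 i hi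

theorem prod_X_sub_C_mem_vanishingDegreeLT (hA : A.card < m) :
    ∏ j ∈ A, (X - C (β j)) ∈ vanishingDegreeLT β m A := by
  refine mem_vanishingDegreeLT.2 ⟨?_, fun j hj => ?_⟩
  · rw [mem_degreeLT, degree_prod]
    simp only [degree_X_sub_C, Finset.sum_const, nsmul_eq_mul, mul_one]
    exact_mod_cast hA
  · rw [eval_prod]
    exact Finset.prod_eq_zero hj (by simp)

theorem eval_prod_X_sub_C_ne_zero (hβ : Function.Injective β) {i : ι} (hi : i ∉ A) :
    (∏ j ∈ A, (X - C (β j))).eval (β i) ≠ 0 := by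
  rw [eval_prod, Finset.prod_ne_zero_iff]
  intro j hj
  simpa [sub_eq_zero] using hβ.ne (ne_of_mem_of_not_mem hj hi).symm

theorem map_mulLeft_vanishingDegreeLT [DecidableEq ι] (hβ : Function.Injective β) (i : ι)
    (K : ℕ) (A : Finset ι) :
    (vanishingDegreeLT β K (A.erase i)).map (LinearMap.mulLeft F (X - C (β i))) =
      vanishingDegreeLT β (K + 1) A ⊓ LinearMap.ker (leval (β i)) := by
  ext p
  simp only [Submodule.mem_map, LinearMap.mulLeft_apply, Submodule.mem_inf, LinearMap.mem_ker,
    leval_apply, mem_vanishingDegreeLT, Finset.mem_erase]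
  constructor
  · rintro ⟨q, ⟨hq, hvan⟩, rfl⟩
    refine ⟨⟨X_sub_C_mul_mem_degreeLT_succ_iff.2 hq, fun j hj => ?_⟩, by simp⟩
    rcases eq_or_ne j i with rfl | hji
    · simp
    · simp [hvan j ⟨hji, hj⟩]
  · rintro ⟨⟨hp, hvan⟩, hroot⟩
    obtain ⟨q, rfl⟩ := dvd_iff_isRoot.2 hroot
    refine ⟨q, ⟨X_sub_C_mul_mem_degreeLT_succ_iff.1 hp, fun j ⟨hji, hj⟩ => ?_⟩, rfl⟩
    have hβji : β j - β i ≠ 0 := sub_ne_zero.2 (hβ.ne hji)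
    simpa [hβji] using hvan j hj

theorem vanishingDegreeLT_sup_eq_degreeLT_succ_iff [DecidableEq ι] (hβ : Function.Injective β)
    {A1 A2 A3 : Finset ι} {i : ι} (hi2 : i ∈ A2) (hi3 : i ∈ A3) (hi1 : i ∉ A1) {K : ℕ}
    (h1 : A1.card ≤ K) :
    vanishingDegreeLT β (K + 1) A1 ⊔ vanishingDegreeLT β (K + 1) A2 ⊔
        vanishingDegreeLT β (K + 1) A3 = degreeLT F (K + 1) ↔
      vanishingDegreeLT β K A1 ⊔ vanishingDegreeLT β K (A2.erase i) ⊔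
        vanishingDegreeLT β K (A3.erase i) = degreeLT F K := by
  set L := LinearMap.mulLeft F (X - C (β i))
  set κ := LinearMap.ker (leval (β i))
  have hL : Function.Injective L := mul_right_injective₀ (X_sub_C_ne_zero (β i))
  have h23 : vanishingDegreeLT β (K + 1) A2 ⊔ vanishingDegreeLT β (K + 1) A3 ≤ κ :=
    sup_le (vanishingDegreeLT_le_ker_leval hi2) (vanishingDegreeLT_le_ker_leval hi3)
  have hD : (degreeLT F K).map L = degreeLT F (K + 1) ⊓ κ := by
    simpa using map_mulLeft_vanishingDegreeLT hβ i K ∅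
  have hsup : (vanishingDegreeLT β K A1 ⊔ vanishingDegreeLT β K (A2.erase i) ⊔
      vanishingDegreeLT β K (A3.erase i)).map L = (vanishingDegreeLT β (K + 1) A1 ⊔
        vanishingDegreeLT β (K + 1) A2 ⊔ vanishingDegreeLT β (K + 1) A3) ⊓ κ := by
    rw [Submodule.map_sup, Submodule.map_sup, ← Finset.erase_eq_of_notMem hi1,
      map_mulLeft_vanishingDegreeLT hβ, map_mulLeft_vanishingDegreeLT hβ,
      map_mulLeft_vanishingDegreeLT hβ, Finset.erase_eq_of_notMem hi1,
      inf_eq_left.2 (vanishingDegreeLT_le_ker_leval hi2),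
      inf_eq_left.2 (vanishingDegreeLT_le_ker_leval hi3), sup_assoc, sup_assoc,
      sup_comm (_ ⊓ κ), sup_comm (vanishingDegreeLT β (K + 1) A1), sup_inf_assoc_of_le _ h23]
  constructor
  · intro h
    apply Submodule.map_injective_of_injective hL
    rw [hsup, hD, h]
  · intro h
    -- `∏_{j ∈ A1} (X - β j)` spans a complement of `κ` in `degreeLT F (K + 1)`
    refine Submodule.eq_of_inf_ker_eq (leval (β i))
      (sup_le (sup_le vanishingDegreeLT_le_degreeLT vanishingDegreeLT_le_degreeLT)
        vanishingDegreeLT_le_degreeLT)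
      (Submodule.mem_sup_left (Submodule.mem_sup_left
        (prod_X_sub_C_mem_vanishingDegreeLT (Nat.lt_succ_of_le h1))))
      (eval_prod_X_sub_C_ne_zero hβ hi1) ?_
    rw [← hsup, ← hD, h]

end Vanishing

section Duality

variable {n m : ℕ}

noncomputable def degreeLTDualEquiv (m : ℕ) : degreeLT F m ≃ₗ[F] Module.Dual F (Fin m → F) :=
  (degreeLTEquiv F m).trans (Module.piEquiv (Fin m) F F)

theorem degreeLTDualEquiv_apply_pow (p : degreeLT F m) (b : F) :
    degreeLTDualEquiv m p (fun r => b ^ (r : ℕ)) = (p : F[X]).eval b := by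
  rw [eval_eq_sum_degreeLTEquiv p.2]
  simp [degreeLTDualEquiv, Module.piEquiv_apply_apply, mul_comm]

theorem mem_dualAnnihilator_colSpan_iff (V : Matrix (Fin m) (Fin n) F) (A : Finset (Fin n))
    (f : Module.Dual F (Fin m → F)) :
    f ∈ (colSpan V A).dualAnnihilator ↔ ∀ j ∈ A, f (fun r => V r j) = 0 := by
  rw [colSpan, ← SetLike.mem_coe, Submodule.coe_dualAnnihilator_span]
  simp [Set.subset_def]

theorem map_dualAnnihilator_colSpan (β : Fin n → F) (V : Matrix (Fin m) (Fin n) F)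
    (hV : ∀ r j, V r j = β j ^ (r : ℕ)) (A : Finset (Fin n)) :
    (colSpan V A).dualAnnihilator.map
        ((degreeLT F m).subtype ∘ₗ (degreeLTDualEquiv m).symm.toLinearMap) =
      vanishingDegreeLT β m A := by
  have hcol : ∀ j, (fun r : Fin m => V r j) = fun r : Fin m => β j ^ (r : ℕ) :=
    fun j => funext (hV · j)
  ext p
  simp only [Submodule.mem_map, mem_dualAnnihilator_colSpan_iff, hcol, mem_vanishingDegreeLT]
  constructor
  · rintro ⟨f, hf, rfl⟩
    refine ⟨Submodule.coe_mem _, fun j hj => ?_⟩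
    simpa [← degreeLTDualEquiv_apply_pow] using hf j hj
  · rintro ⟨hp, hvan⟩
    refine ⟨degreeLTDualEquiv m ⟨p, hp⟩, fun j hj => ?_, by simp⟩
    rw [degreeLTDualEquiv_apply_pow]
    exact hvan j hj

theorem colSpan_inf_inf_eq_bot_iff (β : Fin n → F) (V : Matrix (Fin m) (Fin n) F)
    (hV : ∀ r j, V r j = β j ^ (r : ℕ)) (A1 A2 A3 : Finset (Fin n)) :
    colSpan V A1 ⊓ colSpan V A2 ⊓ colSpan V A3 = ⊥ ↔
      vanishingDegreeLT β m A1 ⊔ vanishingDegreeLT β m A2 ⊔ vanishingDegreeLT β m A3 =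
        degreeLT F m := by
  set Θ := (degreeLT F m).subtype ∘ₗ (degreeLTDualEquiv m).symm.toLinearMap
  have hΘ : Function.Injective Θ :=
    (degreeLT F m).injective_subtype.comp (degreeLTDualEquiv m).symm.injective
  have hrange : (⊤ : Submodule F _).map Θ = degreeLT F m := by
    rw [Submodule.map_top, LinearMap.range_comp_of_range_eq_top _ (LinearEquiv.range _),
      Submodule.range_subtype]
  rw [← Submodule.dualAnnihilator_eq_top_iff, Subspace.dualAnnihilator_inf_eq,
    Subspace.dualAnnihilator_inf_eq, ← (Submodule.map_injective_of_injective hΘ).eq_iff,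
    Submodule.map_sup, Submodule.map_sup, hrange]
  simp only [Θ, map_dualAnnihilator_colSpan β V hV]

end Duality

end

theorem stmt_18_general (F : Type*) [Field F] (n k : ℕ) (hk : 1 ≤ k)
    (β : Fin n → F) (hβ : Function.Injective β)
    (V : Matrix (Fin k) (Fin n) F) (hV : ∀ r j, V r j = β j ^ (r : ℕ))
    (V' : Matrix (Fin (k - 1)) (Fin n) F) (hV' : ∀ r j, V' r j = β j ^ (r : ℕ))
    (A1 A2 A3 : Finset (Fin n)) (i : Fin n)
    (hi2 : i ∈ A2) (hi3 : i ∈ A3) (hi1 : i ∉ A1)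
    (h1 : A1.card ≤ k - 1) :
    (colSpan V A1 ⊓ colSpan V A2 ⊓ colSpan V A3 = ⊥ ↔
      colSpan V' A1 ⊓ colSpan V' (A2.erase i) ⊓ colSpan V' (A3.erase i) = ⊥) := by
  obtain ⟨K, rfl⟩ : ∃ K, k = K + 1 := ⟨k - 1, (Nat.sub_add_cancel hk).symm⟩
  rw [colSpan_inf_inf_eq_bot_iff β V hV, colSpan_inf_inf_eq_bot_iff β V' hV']
  exact vanishingDegreeLT_sup_eq_degreeLT_succ_iff hβ hi2 hi3 hi1 h1

theorem stmt_18 (F : Type*) [Field F] (n k : ℕ) (hk : 1 ≤ k)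
    (β : Fin n → F) (hβ : Function.Injective β)
    (V : Matrix (Fin k) (Fin n) F) (hV : ∀ r j, V r j = β j ^ (r : ℕ))
    (V' : Matrix (Fin (k - 1)) (Fin n) F) (hV' : ∀ r j, V' r j = β j ^ (r : ℕ))
    (A1 A2 A3 : Finset (Fin n)) (i : Fin n)
    (hi2 : i ∈ A2) (hi3 : i ∈ A3) (hi1 : i ∉ A1)
    (hsum : A1.card + A2.card + A3.card = 2 * k)
    (h1 : A1.card ≤ k - 1) (h2 : A2.card ≤ k) (h3 : A3.card ≤ k) :
    (colSpan V A1 ⊓ colSpan V A2 ⊓ colSpan V A3 = ⊥ ↔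
      colSpan V' A1 ⊓ colSpan V' (A2.erase i) ⊓ colSpan V' (A3.erase i) = ⊥) :=
  stmt_18_general F n k hk β hβ V hV V' hV' A1 A2 A3 i hi2 hi3 hi1 h1
end
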